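/- arXiv:1509.02183 — 2 statements merged into one kernel-verified Lean document; each statement's English description precedes it below -/
import Mathlib

section
/- Fix (φ,θ₀) ∈ G. Let β₁ and β₂ be two primitives of ω on D² satisfying the boundary normalization, and let f₁, f₂ be the corresponding action functions, i.e. smooth functions on D² with D(f_i)_p(v) = (β_i)_{φ(p)}(Dφ_p(v)) − (β_i)_p(v) for all p, v and f_i = θ₀ on ∂D². Then the Calabi invariants agree: ∫_{D²} f₁ ω = ∫_{D²} f₂ ω. -/
open Real MeasureTheory Metric Set Filter
open Topology

noncomputable section

/-- The closed unit disk in `ℝ² ≅ ℂ`. -/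
def D2 : Set ℂ := Metric.closedBall 0 1

/-- Rotation of the plane by angle `2πθ`. -/
def rotate (θ : ℝ) (p : ℂ) : ℂ := Complex.exp (2 * Real.pi * θ * Complex.I) * p

/-- The standard primitive `β` of the area form `ω`: `β_p(v) = (p₁v₂ − p₂v₁)/(2π)`. -/
def beta (p v : ℂ) : ℝ := (p.re * v.im - p.im * v.re) / (2 * Real.pi)

/-- `(φ, θ₀) ∈ G`: `φ` is a smooth area-preserving diffeomorphism of the closed unit
disk which agrees with rotation by `2πθ₀` near the boundary. -/
structure MemG (φ : ℂ → ℂ) (θ₀ : ℝ) : Prop where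
  smooth : ContDiffOn ℝ (⊤ : ℕ∞) φ D2
  bijOn : Set.BijOn φ D2 D2
  smooth_inv : ∃ ψ : ℂ → ℂ, ContDiffOn ℝ (⊤ : ℕ∞) ψ D2 ∧ Set.LeftInvOn ψ φ D2 ∧ Set.RightInvOn ψ φ D2
  area : ∀ p ∈ D2, (fderivWithin ℝ φ D2 p).det = 1
  rot_near_bd : ∃ δ > (0:ℝ), ∀ p ∈ D2, 1 - δ ≤ ‖p‖ → φ p = rotate θ₀ p

/-- `f` is the action function of `(φ,θ₀)`:
`Df_p(v) = β_{φ(p)}(Dφ_p(v)) − β_p(v)` on the disk and `f = θ₀` on the boundary. -/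
structure IsActionFunction (φ : ℂ → ℂ) (θ₀ : ℝ) (f : ℂ → ℝ) : Prop where
  smooth : ContDiffOn ℝ (⊤ : ℕ∞) f D2
  deriv : ∀ p ∈ D2, ∀ v : ℂ,
    fderivWithin ℝ f D2 p v = beta (φ p) (fderivWithin ℝ φ D2 p v) - beta p v
  boundary : ∀ p : ℂ, ‖p‖ = 1 → f p = θ₀

/-- The Calabi invariant: the average `∫_{D²} f ω` with respect to the normalized
area form `ω = (1/π) dx∧dy`. -/
def Calabi (f : ℂ → ℝ) : ℝ := (1 / Real.pi) * ∫ p in D2, f p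

/-- `x` is a periodic orbit of `φ` of period `d ≥ 1`. -/
def IsPeriodicOrbit (φ : ℂ → ℂ) (x : ℂ) (d : ℕ) : Prop :=
  x ∈ D2 ∧ 1 ≤ d ∧ φ^[d] x = x ∧
    ∀ i < d, ∀ j < d, φ^[i] x = φ^[j] x → i = j

/-- The total action `𝒜(γ) = Σ_{i=0}^{d−1} f(φ^i(x))` of a periodic orbit. -/
def totalAction (φ : ℂ → ℂ) (f : ℂ → ℝ) (x : ℂ) (d : ℕ) : ℝ :=
  ∑ i ∈ Finset.range d, f (φ^[i] x)


/-- A smooth 1-form `B` on `D²` which is a primitive of `ω = (1/π)dx∧dy`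
(`∂₁B₂ − ∂₂B₁ = 1/π`) satisfying the boundary normalization `B_p((−p₂,p₁)) = 1/(2π)`
for `|p| = 1`. -/
structure IsNormalizedPrimitive (B : ℂ → ℂ →L[ℝ] ℝ) : Prop where
  smooth : ContDiffOn ℝ (⊤ : ℕ∞) B D2
  primitive : ∀ p ∈ D2,
    fderivWithin ℝ (fun q => B q Complex.I) D2 p 1
      - fderivWithin ℝ (fun q => B q 1) D2 p Complex.I = 1 / Real.pi
  boundary : ∀ p : ℂ, ‖p‖ = 1 → B p (Complex.I * p) = 1 / (2 * Real.pi)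

/-- `f` is the action function of `(φ,θ₀)` with respect to the primitive `B`:
`Df_p(v) = B_{φ(p)}(Dφ_p(v)) − B_p(v)` on the disk and `f = θ₀` on the boundary. -/
structure IsActionFunctionFor (B : ℂ → ℂ →L[ℝ] ℝ) (φ : ℂ → ℂ) (θ₀ : ℝ) (f : ℂ → ℝ) :
    Prop where
  smooth : ContDiffOn ℝ (⊤ : ℕ∞) f D2
  deriv : ∀ p ∈ D2, ∀ v : ℂ,
    fderivWithin ℝ f D2 p v = B (φ p) (fderivWithin ℝ φ D2 p v) - B p v
  boundary : ∀ p : ℂ, ‖p‖ = 1 → f p = θ₀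

private lemma mem_D2_iff {p : ℂ} : p ∈ D2 ↔ ‖p‖ ≤ 1 := by
  simp [D2, mem_closedBall_zero_iff]

private lemma smul_mem_D2 {p : ℂ} (hp : p ∈ D2) {t : ℝ} (ht : t ∈ Set.Icc (0:ℝ) 1) :
    t • p ∈ D2 := by
  rw [mem_D2_iff] at hp ⊢
  rw [norm_smul]
  calc ‖t‖ * ‖p‖ ≤ 1 * 1 := by
        apply mul_le_mul _ hp (norm_nonneg p) zero_le_one
        rw [Real.norm_eq_abs, abs_of_nonneg ht.1]; exact ht.2
    _ = 1 := one_mul 1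

private lemma smul_mem_ball' {p : ℂ} (hp : p ∈ Metric.ball (0:ℂ) 1) {t : ℝ}
    (ht : t ∈ Set.Icc (0:ℝ) 1) : t • p ∈ Metric.ball (0:ℂ) 1 := by
  rw [mem_ball_zero_iff] at hp ⊢
  rw [norm_smul]
  calc ‖t‖ * ‖p‖ ≤ 1 * ‖p‖ := by
        apply mul_le_mul_of_nonneg_right _ (norm_nonneg p)
        rw [Real.norm_eq_abs, abs_of_nonneg ht.1]; exact ht.2
    _ = ‖p‖ := one_mul _
    _ < 1 := hp

private lemma clm_symm_aux (A : ℂ →L[ℝ] ℂ →L[ℝ] ℝ) (h : A 1 Complex.I = A Complex.I 1)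
    (w u : ℂ) : A w u = A u w := by
  have e : ∀ z : ℂ, z = z.re • (1:ℂ) + z.im • Complex.I := by
    intro z
    apply Complex.ext <;> simp
  have expand : ∀ z y : ℂ, A z y = z.re * y.re * A 1 1 + z.re * y.im * A 1 Complex.I
      + z.im * y.re * A Complex.I 1 + z.im * y.im * A Complex.I Complex.I := by
    intro z y
    conv_lhs => rw [e z, e y]
    simp only [map_add, _root_.map_smul, ContinuousLinearMap.add_apply, ContinuousLinearMap.smul_apply,
      smul_eq_mul]
    ring
  rw [expand w u, expand u w, h]; ring

private lemma norm_rot (θ : ℝ) : ‖Complex.exp (2 * Real.pi * θ * Complex.I)‖ = 1 := by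
  rw [Complex.norm_exp]
  simp

set_option maxHeartbeats 1000000 in
private lemma exists_g (C : ℂ → ℂ →L[ℝ] ℝ) (hCc : ContinuousOn C D2)
    (hCd : ∀ q ∈ Metric.ball (0:ℂ) 1, DifferentiableAt ℝ C q)
    (M M' : ℝ) (hM : ∀ q ∈ D2, ‖C q‖ ≤ M)
    (hM' : ∀ q ∈ Metric.ball (0:ℂ) 1, ‖fderiv ℝ C q‖ ≤ M')
    (hsymm : ∀ q ∈ Metric.ball (0:ℂ) 1, ∀ w u : ℂ, fderiv ℝ C q w u = fderiv ℝ C q u w)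
    (hbd : ∀ p : ℂ, ‖p‖ = 1 → C p (Complex.I * p) = 0) :
    ∃ g : ℂ → ℝ, ContinuousOn g D2 ∧ (∀ p ∈ Metric.ball (0:ℂ) 1, HasFDerivAt g (C p) p) ∧
      ∀ α : ℝ, g (Complex.exp (2 * Real.pi * α * Complex.I)) = g 1 := by
  classical
  set μ : Measure ℝ := volume.restrict (Set.Ioc (0:ℝ) 1) with hμ
  set g : ℂ → ℝ := fun p => ∫ t, C ((t:ℝ) • p) p ∂μ with hg
  -- basic facts
  have hball_sub : Metric.ball (0:ℂ) 1 ⊆ D2 := Metric.ball_subset_closedBall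
  have hcontC : ∀ p ∈ D2, ContinuousOn (fun t : ℝ => C (t • p)) (Set.Icc 0 1) := by
    intro p hp
    exact hCc.comp ((continuous_id.smul continuous_const).continuousOn)
      (fun t ht => smul_mem_D2 hp ht)
  have hFmeas : ∀ p ∈ D2, ∀ v : ℂ, AEStronglyMeasurable (fun t : ℝ => C (t • p) v) μ := by
    intro p hp v
    refine (((hcontC p hp).mono Set.Ioc_subset_Icc_self).clm_apply
      continuousOn_const).aestronglyMeasurable measurableSet_Ioc
  have hM0 : 0 ≤ M := le_trans (norm_nonneg _) (hM 0 (by rw [mem_D2_iff]; simp))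
  have hM'0 : 0 ≤ M' := le_trans (norm_nonneg (fderiv ℝ C 0)) (hM' 0 (by simp))
  have hFint : ∀ p ∈ D2, ∀ v : ℂ, Integrable (fun t : ℝ => C (t • p) v) μ := by
    intro p hp v
    have : IntegrableOn (fun t : ℝ => C (t • p) v) (Set.Icc 0 1) :=
      (((hcontC p hp)).clm_apply continuousOn_const).integrableOn_compact isCompact_Icc
    exact this.mono_set Set.Ioc_subset_Icc_self
  -- derivative of g at interior points
  have hderiv_g : ∀ p ∈ Metric.ball (0:ℂ) 1, HasFDerivAt g (C p) p := by
    intro p hp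
    have hpn : ‖p‖ < 1 := mem_ball_zero_iff.mp hp
    have hε0 : 0 < 1 - ‖p‖ := by linarith
    have hball : ∀ x ∈ Metric.ball p (1 - ‖p‖), x ∈ Metric.ball (0:ℂ) 1 := by
      intro x hx
      rw [mem_ball_zero_iff]
      have h1 : ‖x - p‖ < 1 - ‖p‖ := mem_ball_iff_norm.mp hx
      calc ‖x‖ = ‖p + (x - p)‖ := by ring_nf
        _ ≤ ‖p‖ + ‖x - p‖ := norm_add_le _ _
        _ < 1 := by linarith
    set F' : ℂ → ℝ → ℂ →L[ℝ] ℝ := fun x t => C (t • x) + t • (fderiv ℝ C (t • x) x) with hF'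
    have hbnd : ∀ t ∈ Set.Ioc (0:ℝ) 1, ∀ x ∈ Metric.ball p (1 - ‖p‖), ‖F' x t‖ ≤ M + M' := by
      intro t ht x hx
      have hxb := hball x hx
      have hq : t • x ∈ Metric.ball (0:ℂ) 1 := smul_mem_ball' hxb ⟨ht.1.le, ht.2⟩
      have h1 : ‖C (t • x)‖ ≤ M := hM _ (hball_sub hq)
      have h2 : ‖fderiv ℝ C (t • x) x‖ ≤ M' := by
        calc ‖fderiv ℝ C (t • x) x‖ ≤ ‖fderiv ℝ C (t • x)‖ * ‖x‖ :=
              ContinuousLinearMap.le_opNorm _ _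
          _ ≤ M' * 1 := mul_le_mul (hM' _ hq) (le_of_lt (mem_ball_zero_iff.mp hxb))
              (norm_nonneg _) hM'0
          _ = M' := mul_one _
      calc ‖F' x t‖ ≤ ‖C (t • x)‖ + ‖t • fderiv ℝ C (t • x) x‖ := norm_add_le _ _
        _ ≤ M + M' := by
            have h3 : ‖t • fderiv ℝ C (t • x) x‖ = ‖t‖ * ‖fderiv ℝ C (t • x) x‖ :=
              norm_smul t (fderiv ℝ C (t • x) x)
            rw [h3, Real.norm_eq_abs, abs_of_nonneg ht.1.le]
            nlinarith [norm_nonneg (fderiv ℝ C (t • x) x), ht.1.le, ht.2]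
    have hF'meas : AEStronglyMeasurable (F' p) μ := by
      have m1 : AEStronglyMeasurable (fun t : ℝ => C (t • p)) μ :=
        ((hcontC p (hball_sub hp)).mono Set.Ioc_subset_Icc_self).aestronglyMeasurable
          measurableSet_Ioc
      have m2 : Measurable fun t : ℝ => fderiv ℝ C (t • p) :=
        (measurable_fderiv ℝ C).comp ((continuous_id.smul continuous_const).measurable)
      have m3 : Measurable fun t : ℝ => fderiv ℝ C (t • p) p :=
        m2.apply_continuousLinearMap p
      have m4 : Measurable fun t : ℝ => t • (fderiv ℝ C (t • p) p) :=
        measurable_id.smul m3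
      exact m1.add m4.aestronglyMeasurable
    have h_diff : ∀ᵐ t ∂μ, ∀ x ∈ Metric.ball p (1 - ‖p‖),
        HasFDerivAt (fun y => C (t • y) y) (F' x t) x := by
      filter_upwards [ae_restrict_mem measurableSet_Ioc] with t ht
      intro x hx
      have hxb := hball x hx
      have hq : t • x ∈ Metric.ball (0:ℂ) 1 := smul_mem_ball' hxb ⟨ht.1.le, ht.2⟩
      have hC' : HasFDerivAt C (fderiv ℝ C (t • x)) (t • x) := (hCd _ hq).hasFDerivAt
      have hlin : HasFDerivAt (fun y : ℂ => t • y) (t • ContinuousLinearMap.id ℝ ℂ) x :=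
        (t • ContinuousLinearMap.id ℝ ℂ).hasFDerivAt
      have hcomp : HasFDerivAt (fun y : ℂ => C (t • y))
          ((fderiv ℝ C (t • x)).comp (t • ContinuousLinearMap.id ℝ ℂ)) x := hC'.comp x hlin
      have happ := hcomp.clm_apply (hasFDerivAt_id x)
      refine happ.congr_fderiv (Eq.symm ?_)
      ext v
      simp only [hF', ContinuousLinearMap.add_apply, ContinuousLinearMap.coe_comp',
        Function.comp_apply, ContinuousLinearMap.flip_apply, ContinuousLinearMap.comp_apply,
        ContinuousLinearMap.smul_apply, ContinuousLinearMap.coe_id', id_eq,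
        ContinuousLinearMap.id_apply, _root_.map_smul, smul_eq_mul]
      rw [hsymm _ hq x v]
    have hFmeas' : ∀ᶠ x in 𝓝 p, AEStronglyMeasurable (fun t : ℝ => C (t • x) x) μ := by
      filter_upwards [isOpen_ball.mem_nhds hp] with x hx using hFmeas x (hball_sub hx) x
    have h_bound : ∀ᵐ t ∂μ, ∀ x ∈ Metric.ball p (1 - ‖p‖), ‖F' x t‖ ≤ M + M' := by
      filter_upwards [ae_restrict_mem measurableSet_Ioc] with t ht using hbnd t ht
    have main := hasFDerivAt_integral_of_dominated_of_fderiv_le (ball_mem_nhds p hε0) hFmeas'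
      (hFint p (hball_sub hp) p) hF'meas h_bound (integrable_const _) h_diff
    have hF'int : Integrable (F' p) μ := by
      refine (integrable_const (M + M')).mono' hF'meas ?_
      filter_upwards [ae_restrict_mem measurableSet_Ioc] with t ht
      exact hbnd t ht p (mem_ball_self hε0)
    have hkey : (∫ t, F' p t ∂μ) = C p := by
      refine ContinuousLinearMap.ext fun v => ?_
      rw [ContinuousLinearMap.integral_apply hF'int v]
      have hint2 : Integrable (fun t => F' p t v) μ := hF'int.apply_continuousLinearMap v
      have huderiv : ∀ t ∈ Set.uIcc (0:ℝ) 1,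
          HasDerivAt (fun s : ℝ => s * (C (s • p) v)) (F' p t v) t := by
        intro t ht
        rw [Set.uIcc_of_le zero_le_one] at ht
        have hq : t • p ∈ Metric.ball (0:ℂ) 1 := smul_mem_ball' hp ht
        have h1 : HasDerivAt (fun s : ℝ => s • p) p t := by
          simpa using (hasDerivAt_id t).smul_const p
        have h2 : HasDerivAt (fun s : ℝ => C (s • p)) (fderiv ℝ C (t • p) p) t :=
          ((hCd _ hq).hasFDerivAt).comp_hasDerivAt t h1
        have h3 : HasDerivAt (fun s : ℝ => C (s • p) v) (fderiv ℝ C (t • p) p v) t := by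
          simpa using h2.clm_apply (hasDerivAt_const t v)
        have h4 := (hasDerivAt_id t).fun_mul h3
        have h5 : F' p t v = 1 * C (t • p) v + t * fderiv ℝ C (t • p) p v := by
          simp [hF', smul_eq_mul]
        rw [h5]
        simpa using h4
      have hii : IntervalIntegrable (fun t => F' p t v) volume 0 1 :=
        (intervalIntegrable_iff_integrableOn_Ioc_of_le zero_le_one).mpr hint2
      have hftc := intervalIntegral.integral_eq_sub_of_hasDerivAt huderiv hii
      rw [intervalIntegral.integral_of_le zero_le_one] at hftc
      rw [hμ]
      rw [hftc]
      simp
    rw [hg]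
    exact hkey ▸ main
  -- continuity of g on D2
  have hgcont : ContinuousOn g D2 := by
    rw [hg]
    refine MeasureTheory.continuousOn_of_dominated (bound := fun _ => M)
      (fun x hx => hFmeas x hx x) ?_ (integrable_const _) ?_
    · intro x hx
      filter_upwards [ae_restrict_mem measurableSet_Ioc] with t ht
      calc ‖C (t • x) x‖ ≤ ‖C (t • x)‖ * ‖x‖ := ContinuousLinearMap.le_opNorm _ _
        _ ≤ M * 1 := mul_le_mul (hM _ (smul_mem_D2 hx ⟨ht.1.le, ht.2⟩)) (mem_D2_iff.mp hx)
            (norm_nonneg _) hM0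
        _ = M := mul_one M
    · filter_upwards [ae_restrict_mem measurableSet_Ioc] with t ht
      have hc : ContinuousOn (fun x : ℂ => C (t • x)) D2 :=
        hCc.comp (continuous_const_smul t).continuousOn
          (fun x hx => smul_mem_D2 hx ⟨ht.1.le, ht.2⟩)
      exact hc.clm_apply continuousOn_id
  -- rotation by angle α
  have hne : ∀ α : ℝ, ‖Complex.exp (2 * Real.pi * α * Complex.I)‖ = 1 := norm_rot
  have heD2 : ∀ α : ℝ, Complex.exp (2 * Real.pi * α * Complex.I) ∈ D2 :=
    fun α => mem_D2_iff.mpr (le_of_eq (hne α))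
  have he : ∀ α : ℝ, HasDerivAt (fun β : ℝ => Complex.exp (2 * Real.pi * β * Complex.I))
      (Complex.exp (2 * Real.pi * α * Complex.I) * (2 * Real.pi * Complex.I)) α := by
    intro α
    have h0 : HasDerivAt (fun β : ℝ => (β : ℂ)) 1 α := by
      have h00 := (hasDerivAt_id α).ofReal_comp
      rw [Complex.ofReal_one] at h00
      exact h00
    have h1 : HasDerivAt (fun β : ℝ => 2 * (Real.pi : ℂ) * (β : ℂ) * Complex.I)
        (2 * Real.pi * Complex.I) α := by
      have h2 := (h0.const_mul (2 * (Real.pi : ℂ))).mul_const Complex.I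
      simpa [mul_assoc] using h2
    exact h1.cexp
  have hwnorm : ∀ α : ℝ,
      ‖Complex.exp (2 * Real.pi * α * Complex.I) * (2 * Real.pi * Complex.I)‖ = 2 * Real.pi := by
    intro α
    rw [norm_mul, norm_rot α, one_mul, norm_mul, norm_mul, Complex.norm_I, mul_one]
    simp [Complex.norm_real, Real.norm_eq_abs, abs_of_nonneg Real.pi_pos.le]
  have haeIoo : ∀ᵐ t ∂μ, t ∈ Set.Ioo (0:ℝ) 1 := by
    have h1 : ∀ᵐ t ∂μ, t ∈ Set.Ioc (0:ℝ) 1 := ae_restrict_mem measurableSet_Ioc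
    have h2 : ∀ᵐ t : ℝ ∂μ, t ≠ 1 := by
      refine ae_restrict_of_ae ?_
      have h3 : (volume : Measure ℝ) {1} = 0 := measure_singleton 1
      rw [ae_iff]
      convert h3 using 2
      ext t; simp
    filter_upwards [h1, h2] with t ht htne
    exact ⟨ht.1, lt_of_le_of_ne ht.2 htne⟩
  -- the derivative of α ↦ g(e^{2παi}) vanishes
  have hd : ∀ α₀ : ℝ, HasDerivAt
      (fun β : ℝ => g (Complex.exp (2 * Real.pi * β * Complex.I))) 0 α₀ := by
    intro α₀
    set F' : ℝ → ℝ → ℝ := fun β t =>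
      C (t • Complex.exp (2 * Real.pi * β * Complex.I))
          (Complex.exp (2 * Real.pi * β * Complex.I) * (2 * Real.pi * Complex.I))
        + t * (fderiv ℝ C (t • Complex.exp (2 * Real.pi * β * Complex.I))
            (Complex.exp (2 * Real.pi * β * Complex.I))
            (Complex.exp (2 * Real.pi * β * Complex.I) * (2 * Real.pi * Complex.I))) with hF'
    have hqball : ∀ (t : ℝ), t ∈ Set.Ioo (0:ℝ) 1 → ∀ β : ℝ,
        t • Complex.exp (2 * Real.pi * β * Complex.I) ∈ Metric.ball (0:ℂ) 1 := by
      intro t ht β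
      rw [mem_ball_zero_iff, norm_smul, hne β, mul_one, Real.norm_eq_abs,
        abs_of_nonneg ht.1.le]
      exact ht.2
    have hbnd : ∀ t ∈ Set.Ioo (0:ℝ) 1, ∀ β : ℝ,
        ‖F' β t‖ ≤ M * (2 * Real.pi) + M' * (2 * Real.pi) := by
      intro t ht β
      have hq := hqball t ht β
      simp only [hF']
      set E : ℂ := Complex.exp (2 * Real.pi * β * Complex.I) with hE
      set w : ℂ := E * (2 * Real.pi * Complex.I) with hw
      have hwE : ‖w‖ = 2 * Real.pi := by rw [hw, hE]; exact hwnorm β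
      have hnE : ‖E‖ = 1 := by rw [hE]; exact hne β
      have h1 : ‖C (t • E) w‖ ≤ M * (2 * Real.pi) := by
        refine le_trans (ContinuousLinearMap.le_opNorm _ _) ?_
        rw [hwE]
        exact mul_le_mul_of_nonneg_right (hM _ (hball_sub hq)) (by positivity)
      have h2 : ‖fderiv ℝ C (t • E) E w‖ ≤ M' * (2 * Real.pi) := by
        refine le_trans (ContinuousLinearMap.le_opNorm _ _) ?_
        rw [hwE]
        refine mul_le_mul_of_nonneg_right ?_ (by positivity)
        refine le_trans (ContinuousLinearMap.le_opNorm _ _) ?_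
        rw [hnE, mul_one]
        exact hM' _ hq
      refine le_trans (norm_add_le _ _) ?_
      refine add_le_add h1 ?_
      rw [norm_mul, Real.norm_eq_abs, abs_of_nonneg ht.1.le]
      nlinarith [norm_nonneg (fderiv ℝ C (t • E) E w), ht.1.le, ht.2]
    have hF'meas : AEStronglyMeasurable (F' α₀) μ := by
      have m1 : AEStronglyMeasurable (fun t : ℝ =>
          C (t • Complex.exp (2 * Real.pi * α₀ * Complex.I))
            (Complex.exp (2 * Real.pi * α₀ * Complex.I) * (2 * Real.pi * Complex.I))) μ :=
        hFmeas _ (heD2 α₀) _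
      have m2 : Measurable fun t : ℝ =>
          fderiv ℝ C (t • Complex.exp (2 * Real.pi * α₀ * Complex.I)) :=
        (measurable_fderiv ℝ C).comp ((continuous_id.smul continuous_const).measurable)
      have m3 := (m2.apply_continuousLinearMap
          (Complex.exp (2 * Real.pi * α₀ * Complex.I))).apply_continuousLinearMap
          (Complex.exp (2 * Real.pi * α₀ * Complex.I) * (2 * Real.pi * Complex.I))
      exact m1.add (measurable_id.mul m3).aestronglyMeasurable
    have h_diff : ∀ᵐ t ∂μ, ∀ β ∈ Metric.ball α₀ 1,
        HasDerivAt (fun β' : ℝ => C (t • Complex.exp (2 * Real.pi * β' * Complex.I))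
          (Complex.exp (2 * Real.pi * β' * Complex.I))) (F' β t) β := by
      filter_upwards [haeIoo] with t ht
      intro β _
      have hq := hqball t ht β
      simp only [hF']
      set E : ℂ := Complex.exp (2 * Real.pi * β * Complex.I) with hE
      set w : ℂ := E * (2 * Real.pi * Complex.I) with hw
      have heβ : HasDerivAt (fun β' : ℝ => Complex.exp (2 * Real.pi * β' * Complex.I)) w β := by
        rw [hw, hE]; exact he β
      have hc : HasDerivAt (fun β' : ℝ => C (t • Complex.exp (2 * Real.pi * β' * Complex.I)))
          (fderiv ℝ C (t • E) (t • w)) β :=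
        ((hCd _ hq).hasFDerivAt).comp_hasDerivAt β (heβ.const_smul t)
      have happ := hc.clm_apply heβ
      refine happ.congr_deriv (Eq.symm ?_)
      rw [(fderiv ℝ C (t • E)).map_smul, ContinuousLinearMap.smul_apply, smul_eq_mul,
        hsymm _ hq E w]
      ring
    have h_bound : ∀ᵐ t ∂μ, ∀ β ∈ Metric.ball α₀ 1,
        ‖F' β t‖ ≤ M * (2 * Real.pi) + M' * (2 * Real.pi) := by
      filter_upwards [haeIoo] with t ht
      intro β _
      exact hbnd t ht β
    have hFmeas' : ∀ᶠ β : ℝ in 𝓝 α₀, AEStronglyMeasurable (fun t : ℝ =>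
        C (t • Complex.exp (2 * Real.pi * β * Complex.I))
          (Complex.exp (2 * Real.pi * β * Complex.I))) μ := by
      apply Filter.Eventually.of_forall
      intro β
      exact hFmeas _ (heD2 β) _
    have main := hasDerivAt_integral_of_dominated_loc_of_deriv_le (ball_mem_nhds α₀ one_pos) hFmeas'
      (hFint _ (heD2 α₀) _) hF'meas h_bound (integrable_const _) h_diff
    have hzero : (∫ t, F' α₀ t ∂μ) = 0 := by
      have hcontu : ContinuousOn (fun t : ℝ => t * C
          (t • Complex.exp (2 * Real.pi * α₀ * Complex.I))
          (Complex.exp (2 * Real.pi * α₀ * Complex.I) * (2 * Real.pi * Complex.I)))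
          (Set.Icc 0 1) :=
        continuousOn_id.mul ((hcontC _ (heD2 α₀)).clm_apply continuousOn_const)
      have hderivu : ∀ t ∈ Set.Ioo (0:ℝ) 1, HasDerivWithinAt (fun t : ℝ => t * C
          (t • Complex.exp (2 * Real.pi * α₀ * Complex.I))
          (Complex.exp (2 * Real.pi * α₀ * Complex.I) * (2 * Real.pi * Complex.I)))
          (F' α₀ t) (Set.Ioi t) t := by
        intro t ht
        have hq := hqball t ht α₀
        have h1 : HasDerivAt (fun s : ℝ => s • Complex.exp (2 * Real.pi * α₀ * Complex.I))
            (Complex.exp (2 * Real.pi * α₀ * Complex.I)) t := by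
          simpa using (hasDerivAt_id t).smul_const (Complex.exp (2 * Real.pi * α₀ * Complex.I))
        have h2 : HasDerivAt (fun s : ℝ => C (s • Complex.exp (2 * Real.pi * α₀ * Complex.I)))
            (fderiv ℝ C (t • Complex.exp (2 * Real.pi * α₀ * Complex.I))
              (Complex.exp (2 * Real.pi * α₀ * Complex.I))) t :=
          ((hCd _ hq).hasFDerivAt).comp_hasDerivAt t h1
        have h3 : HasDerivAt (fun s : ℝ => C (s • Complex.exp (2 * Real.pi * α₀ * Complex.I))
            (Complex.exp (2 * Real.pi * α₀ * Complex.I) * (2 * Real.pi * Complex.I)))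
            (fderiv ℝ C (t • Complex.exp (2 * Real.pi * α₀ * Complex.I))
              (Complex.exp (2 * Real.pi * α₀ * Complex.I))
              (Complex.exp (2 * Real.pi * α₀ * Complex.I) * (2 * Real.pi * Complex.I))) t := by
          simpa using h2.clm_apply (hasDerivAt_const t
            (Complex.exp (2 * Real.pi * α₀ * Complex.I) * (2 * Real.pi * Complex.I)))
        have h4 := (hasDerivAt_id t).fun_mul h3
        have h5 : F' α₀ t = 1 * C (t • Complex.exp (2 * Real.pi * α₀ * Complex.I))
            (Complex.exp (2 * Real.pi * α₀ * Complex.I) * (2 * Real.pi * Complex.I))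
            + t * fderiv ℝ C (t • Complex.exp (2 * Real.pi * α₀ * Complex.I))
              (Complex.exp (2 * Real.pi * α₀ * Complex.I))
              (Complex.exp (2 * Real.pi * α₀ * Complex.I) * (2 * Real.pi * Complex.I)) := by
          simp only [hF']; ring
        rw [h5]
        exact (by simpa using h4 : HasDerivAt _ _ t).hasDerivWithinAt
      have hii : IntervalIntegrable (F' α₀) volume 0 1 :=
        (intervalIntegrable_iff_integrableOn_Ioc_of_le zero_le_one).mpr main.1
      have hftc := intervalIntegral.integral_eq_sub_of_hasDeriv_right_of_le zero_le_one
        hcontu hderivu hii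
      rw [intervalIntegral.integral_of_le zero_le_one] at hftc
      rw [hμ, hftc]
      have hsm : Complex.exp (2 * Real.pi * α₀ * Complex.I) * (2 * Real.pi * Complex.I)
          = (2 * Real.pi : ℝ) • (Complex.I * Complex.exp (2 * Real.pi * α₀ * Complex.I)) := by
        rw [Complex.real_smul]
        push_cast
        ring
      simp only [one_mul, zero_mul, one_smul, sub_zero]
      rw [hsm, _root_.map_smul, smul_eq_mul, hbd _ (hne α₀), mul_zero]
    rw [hg]
    exact hzero ▸ main.2
  have hdiffg : Differentiable ℝ (fun β : ℝ => g (Complex.exp (2 * Real.pi * β * Complex.I))) :=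
    fun α => (hd α).differentiableAt
  have hconst := fun α : ℝ => is_const_of_deriv_eq_zero hdiffg
    (fun α => (hd α).deriv) α 0
  refine ⟨g, hgcont, hderiv_g, fun α => ?_⟩
  have h0 : Complex.exp (2 * Real.pi * (0:ℝ) * Complex.I) = 1 := by
    norm_num
  rw [← h0]
  exact hconst α

private lemma rotate_norm' (θ : ℝ) (z : ℂ) : ‖rotate θ z‖ = ‖z‖ := by
  rw [rotate, norm_mul, norm_rot, one_mul]

private lemma rotate_rotate_neg (θ : ℝ) (z : ℂ) : rotate θ (rotate (-θ) z) = z := by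
  rw [rotate, rotate, ← mul_assoc, ← Complex.exp_add]
  have h : (2 * (Real.pi:ℂ) * θ * Complex.I) + (2 * Real.pi * ((-θ : ℝ) : ℂ) * Complex.I) = 0 := by
    push_cast; ring
  rw [h, Complex.exp_zero, one_mul]

set_option maxHeartbeats 1000000 in
/-- The Calabi invariant does not depend on the choice of normalized primitive of `ω`
used to define the action function. -/
theorem calabi_indep_of_primitive (θ₀ : ℝ) (φ : ℂ → ℂ) (hG : MemG φ θ₀)
    (B₁ B₂ : ℂ → ℂ →L[ℝ] ℝ) (hB₁ : IsNormalizedPrimitive B₁)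
    (hB₂ : IsNormalizedPrimitive B₂) (f₁ f₂ : ℂ → ℝ)
    (hf₁ : IsActionFunctionFor B₁ φ θ₀ f₁) (hf₂ : IsActionFunctionFor B₂ φ θ₀ f₂) :
    Calabi f₁ = Calabi f₂ := by
  have hD2meas : MeasurableSet D2 := measurableSet_closedBall
  have hD2cpt : IsCompact D2 := isCompact_closedBall _ _
  have hintD2 : interior D2 = Metric.ball (0:ℂ) 1 := by
    show interior (Metric.closedBall (0:ℂ) 1) = _
    exact interior_closedBall 0 one_ne_zero
  have hUD : UniqueDiffOn ℝ D2 := uniqueDiffOn_convex (convex_closedBall (0:ℂ) 1)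
    (by rw [hintD2]; exact ⟨0, mem_ball_self one_pos⟩)
  have hnhds : ∀ p ∈ Metric.ball (0:ℂ) 1, D2 ∈ 𝓝 p := fun p hp =>
    Filter.mem_of_superset (Metric.isOpen_ball.mem_nhds hp) Metric.ball_subset_closedBall
  set C : ℂ → ℂ →L[ℝ] ℝ := fun q => B₁ q - B₂ q with hC
  have hCs : ContDiffOn ℝ (⊤ : ℕ∞) C D2 := hB₁.smooth.sub hB₂.smooth
  have hCc : ContinuousOn C D2 := hCs.continuousOn
  have hB₁d : ∀ q ∈ Metric.ball (0:ℂ) 1, DifferentiableAt ℝ B₁ q := fun q hq =>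
    (hB₁.smooth.contDiffAt (hnhds q hq)).differentiableAt (by simp)
  have hB₂d : ∀ q ∈ Metric.ball (0:ℂ) 1, DifferentiableAt ℝ B₂ q := fun q hq =>
    (hB₂.smooth.contDiffAt (hnhds q hq)).differentiableAt (by simp)
  have hCd : ∀ q ∈ Metric.ball (0:ℂ) 1, DifferentiableAt ℝ C q := fun q hq =>
    (hB₁d q hq).sub (hB₂d q hq)
  obtain ⟨M, hM⟩ := hD2cpt.exists_bound_of_continuousOn hCc
  have hfdc : ContinuousOn (fderivWithin ℝ C D2) D2 :=
    hCs.continuousOn_fderivWithin hUD (by simp)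
  obtain ⟨M', hM'w⟩ := hD2cpt.exists_bound_of_continuousOn (f := fderivWithin ℝ C D2) hfdc
  have hM' : ∀ q ∈ Metric.ball (0:ℂ) 1, ‖fderiv ℝ C q‖ ≤ M' := by
    intro q hq
    rw [← fderivWithin_of_mem_nhds (hnhds q hq)]
    exact hM'w q (Metric.ball_subset_closedBall hq)
  have hCq : ∀ q ∈ Metric.ball (0:ℂ) 1, fderiv ℝ C q = fderiv ℝ B₁ q - fderiv ℝ B₂ q := by
    intro q hq
    rw [hC]
    exact fderiv_sub (hB₁d q hq) (hB₂d q hq)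
  have hflip : ∀ (B : ℂ → ℂ →L[ℝ] ℝ), (∀ q ∈ Metric.ball (0:ℂ) 1, DifferentiableAt ℝ B q) →
      ∀ q ∈ Metric.ball (0:ℂ) 1, ∀ v w : ℂ,
      fderivWithin ℝ (fun x => B x v) D2 q w = fderiv ℝ B q w v := by
    intro B hBd q hq v w
    rw [fderivWithin_of_mem_nhds (hnhds q hq)]
    rw [fderiv_clm_apply (hBd q hq) (differentiableAt_const v)]
    simp
  have hsymm : ∀ q ∈ Metric.ball (0:ℂ) 1, ∀ w u : ℂ,
      fderiv ℝ C q w u = fderiv ℝ C q u w := by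
    intro q hq w u
    have hqD2 : q ∈ D2 := Metric.ball_subset_closedBall hq
    have h1 := hB₁.primitive q hqD2
    have h2 := hB₂.primitive q hqD2
    rw [hflip B₁ hB₁d q hq Complex.I 1, hflip B₁ hB₁d q hq 1 Complex.I] at h1
    rw [hflip B₂ hB₂d q hq Complex.I 1, hflip B₂ hB₂d q hq 1 Complex.I] at h2
    refine clm_symm_aux _ ?_ w u
    rw [hCq q hq]
    simp only [ContinuousLinearMap.sub_apply]
    linarith
  have hbd : ∀ p : ℂ, ‖p‖ = 1 → C p (Complex.I * p) = 0 := by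
    intro p hp1
    have habs : ‖p‖ = 1 := by exact hp1
    rw [hC]
    simp only [ContinuousLinearMap.sub_apply, hB₁.boundary p habs, hB₂.boundary p habs, sub_self]
  obtain ⟨g, hgc, hgd, hgrot⟩ := exists_g C hCc hCd M M' hM hM' hsymm hbd
  -- φ facts
  have hφc : ContinuousOn φ D2 := hG.smooth.continuousOn
  have hφmaps : Set.MapsTo φ D2 D2 := hG.bijOn.mapsTo
  obtain ⟨δ, hδ0, hrot⟩ := hG.rot_near_bd
  have hφball : ∀ p ∈ Metric.ball (0:ℂ) 1, φ p ∈ Metric.ball (0:ℂ) 1 := by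
    intro p hp
    have hpD2 : p ∈ D2 := Metric.ball_subset_closedBall hp
    have h1 : φ p ∈ D2 := hφmaps hpD2
    rw [mem_ball_zero_iff]
    rcases lt_or_eq_of_le (mem_D2_iff.mp h1) with h | h
    · exact h
    · exfalso
      have hqn : ‖rotate (-θ₀) (φ p)‖ = 1 := by rw [rotate_norm']; exact h
      have hqD2 : rotate (-θ₀) (φ p) ∈ D2 := mem_D2_iff.mpr hqn.le
      have habs : ‖rotate (-θ₀) (φ p)‖ = 1 := by
        exact hqn
      have h2 : φ (rotate (-θ₀) (φ p)) = φ p := by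
        rw [hrot _ hqD2 (by rw [habs]; linarith), rotate_rotate_neg]
      have h3 : rotate (-θ₀) (φ p) = p := hG.bijOn.injOn hqD2 hpD2 h2
      rw [h3] at hqn
      rw [mem_ball_zero_iff, hqn] at hp
      exact lt_irrefl _ hp
  have hφd : ∀ p ∈ Metric.ball (0:ℂ) 1, HasFDerivAt φ (fderiv ℝ φ p) p := fun p hp =>
    ((hG.smooth.contDiffAt (hnhds p hp)).differentiableAt (by simp)).hasFDerivAt
  have hfd : ∀ (B : ℂ → ℂ →L[ℝ] ℝ) (f : ℂ → ℝ), IsActionFunctionFor B φ θ₀ f →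
      ∀ p ∈ Metric.ball (0:ℂ) 1, HasFDerivAt f (fderiv ℝ f p) p ∧
        ∀ v, fderiv ℝ f p v = B (φ p) (fderiv ℝ φ p v) - B p v := by
    intro B f hf p hp
    have hfa : DifferentiableAt ℝ f p :=
      (hf.smooth.contDiffAt (hnhds p hp)).differentiableAt (by simp)
    refine ⟨hfa.hasFDerivAt, fun v => ?_⟩
    have h := hf.deriv p (Metric.ball_subset_closedBall hp) v
    rw [fderivWithin_of_mem_nhds (hnhds p hp)] at h
    rw [fderivWithin_of_mem_nhds (hnhds p hp)] at h
    exact h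
  -- the function F := f₁ - f₂ - (g ∘ φ - g) is constant 0 on D2
  set Fd : ℂ → ℝ := fun p => f₁ p - f₂ p - (g (φ p) - g p) with hFdef
  have hF0 : ∀ p ∈ Metric.ball (0:ℂ) 1, HasFDerivAt Fd (0 : ℂ →L[ℝ] ℝ) p := by
    intro p hp
    have h1 := hfd B₁ f₁ hf₁ p hp
    have h2 := hfd B₂ f₂ hf₂ p hp
    have hgφ : HasFDerivAt (fun x => g (φ x)) ((C (φ p)).comp (fderiv ℝ φ p)) p :=
      (hgd (φ p) (hφball p hp)).comp p (hφd p hp)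
    have hgp : HasFDerivAt g (C p) p := hgd p hp
    have htot := (h1.1.sub h2.1).sub (hgφ.sub hgp)
    have heq : (fderiv ℝ f₁ p - fderiv ℝ f₂ p) - ((C (φ p)).comp (fderiv ℝ φ p) - C p) = 0 := by
      ext v
      simp only [ContinuousLinearMap.sub_apply, ContinuousLinearMap.coe_comp',
        Function.comp_apply, ContinuousLinearMap.zero_apply]
      rw [h1.2 v, h2.2 v, hC]
      simp only [ContinuousLinearMap.sub_apply]
      ring
    rw [heq] at htot
    rw [hFdef]
    exact htot
  have hFc : ContinuousOn Fd D2 := by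
    rw [hFdef]
    exact (hf₁.smooth.continuousOn.sub hf₂.smooth.continuousOn).sub
      ((hgc.comp hφc hφmaps).sub hgc)
  have hcon : ∀ x ∈ Metric.ball (0:ℂ) 1, Fd x = Fd 0 := by
    intro x hx
    refine (convex_ball (0:ℂ) 1).is_const_of_fderivWithin_eq_zero
      (fun y hy => ((hF0 y hy).differentiableAt).differentiableWithinAt) ?_ hx
      (mem_ball_self one_pos)
    intro y hy
    rw [fderivWithin_of_isOpen Metric.isOpen_ball hy]
    exact (hF0 y hy).fderiv
  have hconD2 : ∀ x ∈ D2, Fd x = Fd 0 := by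
    intro x hx
    have hxcl : x ∈ closure (Metric.ball (0:ℂ) 1) := by
      rw [closure_ball (0:ℂ) one_ne_zero]; exact hx
    have hne : (𝓝[Metric.ball (0:ℂ) 1] x).NeBot := mem_closure_iff_nhdsWithin_neBot.mp hxcl
    have t1 : Filter.Tendsto Fd (𝓝[Metric.ball (0:ℂ) 1] x) (𝓝 (Fd x)) :=
      (hFc x hx).mono_left (nhdsWithin_mono x Metric.ball_subset_closedBall)
    have t2 : Filter.Tendsto Fd (𝓝[Metric.ball (0:ℂ) 1] x) (𝓝 (Fd 0)) := by
      refine tendsto_nhdsWithin_congr (fun y hy => (hcon y hy).symm) tendsto_const_nhds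
    exact tendsto_nhds_unique t1 t2
  have h1D2 : (1:ℂ) ∈ D2 := mem_D2_iff.mpr (by norm_num)
  have habs1 : ‖(1:ℂ)‖ = 1 := by simp
  have hφ1 : φ 1 = rotate θ₀ 1 := hrot 1 h1D2 (by rw [habs1]; linarith)
  have hFd1 : Fd 1 = 0 := by
    rw [hFdef]
    simp only []
    rw [hf₁.boundary 1 habs1, hf₂.boundary 1 habs1, hφ1]
    have hr1 : rotate θ₀ (1:ℂ) = Complex.exp (2 * Real.pi * θ₀ * Complex.I) := by
      rw [rotate, mul_one]
    rw [hr1, hgrot θ₀]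
    ring
  have hzero : ∀ x ∈ D2, f₁ x = f₂ x + (g (φ x) - g x) := by
    intro x hx
    have h := hconD2 x hx
    rw [← hconD2 1 h1D2, hFd1] at h
    rw [hFdef] at h
    simp only [] at h
    linarith
  -- change of variables
  have hφdOn : ∀ x ∈ D2, HasFDerivWithinAt φ (fderivWithin ℝ φ D2 x) D2 x := fun x hx =>
    ((hG.smooth.differentiableOn (by simp)) x hx).hasFDerivWithinAt
  have hcov := MeasureTheory.integral_image_eq_integral_abs_det_fderiv_smul volume hD2meas
    hφdOn hG.bijOn.injOn g
  rw [hG.bijOn.image_eq] at hcov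
  have hcov2 : ∫ x in D2, g x = ∫ x in D2, g (φ x) := by
    rw [hcov]
    refine setIntegral_congr_fun hD2meas fun x hx => ?_
    rw [hG.area x hx]
    norm_num
  have hi_f₂ : IntegrableOn f₂ D2 := hf₂.smooth.continuousOn.integrableOn_compact hD2cpt
  have hi_gφ : IntegrableOn (fun x => g (φ x)) D2 :=
    (hgc.comp hφc hφmaps).integrableOn_compact hD2cpt
  have hi_g : IntegrableOn g D2 := hgc.integrableOn_compact hD2cpt
  have hsplit : ∫ x in D2, f₁ x = ∫ x in D2, (f₂ x + (g (φ x) - g x)) :=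
    setIntegral_congr_fun hD2meas fun x hx => hzero x hx
  have hi_sub : IntegrableOn (fun x => g (φ x) - g x) D2 := hi_gφ.sub hi_g
  rw [Calabi, Calabi, hsplit]
  rw [MeasureTheory.integral_add hi_f₂ hi_sub,
    MeasureTheory.integral_sub hi_gφ hi_g, ← hcov2]
  ring
end
end

section
/- Let θ₀ ∈ ℝ and let φ : D² → D² be the rotation φ(p) = e^{2πiθ₀}p. If f : D² → ℝ is smooth with Df_p(v) = β_{φ(p)}(Dφ_p(v)) − β_p(v) for all p ∈ D², v ∈ ℝ², and f = θ₀ on ∂D², then f(p) = θ₀ for all p ∈ D²; consequently the Calabi invariant 𝒱(φ,θ₀) = ∫_{D²} f ω equals θ₀. -/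
open Real MeasureTheory Metric Set Filter

noncomputable section

lemma D2_convex : Convex ℝ D2 := convex_closedBall 0 1
lemma D2_unique : UniqueDiffOn ℝ D2 :=
  uniqueDiffOn_convex D2_convex (by simp [D2, interior_closedBall])

/-- For the rotation `φ(p) = e^{2πiθ₀}p`, the action function is identically `θ₀` on the
disk, and consequently the Calabi invariant equals `θ₀`. -/
theorem calabi_of_rotation (θ₀ : ℝ) (f : ℂ → ℝ)
    (hf : IsActionFunction (rotate θ₀) θ₀ f) :
    (∀ p ∈ D2, f p = θ₀) ∧ Calabi f = θ₀ := by
  set c : ℂ := Complex.exp (2 * Real.pi * θ₀ * Complex.I) with hc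
  have habs : ‖c‖ = 1 := by
    simp [hc, Complex.norm_exp]
  -- fderivWithin of rotate
  have hrot : ∀ p ∈ D2, ∀ v : ℂ, fderivWithin ℝ (rotate θ₀) D2 p v = c * v := by
    intro p hp v
    have h : HasFDerivAt (rotate θ₀) ((c : ℂ) • (ContinuousLinearMap.id ℝ ℂ)) p := by
      have e : rotate θ₀ = fun q => c • (ContinuousLinearMap.id ℝ ℂ) q := by
        funext q; simp [rotate, hc]
      rw [e]
      exact ((ContinuousLinearMap.id ℝ ℂ).hasFDerivAt (x := p)).const_smul (c : ℂ)
    rw [h.hasFDerivWithinAt.fderivWithin (D2_unique p hp)]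
    simp [smul_eq_mul]
  -- the derivative of f vanishes
  have hzero : ∀ p ∈ D2, fderivWithin ℝ f D2 p = 0 := by
    intro p hp
    ext v
    rw [hf.deriv p hp v, hrot p hp v]
    have : beta (rotate θ₀ p) (c * v) = beta p v := by
      simp only [beta, rotate, ← hc]
      have h1 : (c * p).re * (c * v).im - (c * p).im * (c * v).re
          = (‖c‖)^2 * (p.re * v.im - p.im * v.re) := by
        simp only [Complex.mul_re, Complex.mul_im, Complex.sq_norm, Complex.normSq_apply]
        ring
      rw [h1, habs]; ring
    rw [this]; simp
  have hconst : ∀ p ∈ D2, f p = θ₀ := by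
    intro p hp
    have h1 : (1:ℂ) ∈ D2 := by simp [D2]
    have := D2_convex.norm_image_sub_le_of_norm_fderivWithin_le (C := 0)
      (hf.smooth.differentiableOn (by simp))
      (fun x hx => by simp [hzero x hx]) h1 hp
    have hf1 : f 1 = θ₀ := hf.boundary 1 (by simp)
    have : |f p - f 1| ≤ 0 := by simpa using this
    have := abs_nonpos_iff.mp this
    linarith [sub_eq_zero.mp this, hf1]
  refine ⟨hconst, ?_⟩
  have : ∫ p in D2, f p = ∫ _p in D2, θ₀ := by
    apply setIntegral_congr_fun (by simp [D2]; exact measurableSet_closedBall)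
    intro x hx; exact hconst x hx
  rw [Calabi, this]
  rw [setIntegral_const]
  have : volume.real D2 = Real.pi := by
    simp [D2, Measure.real, Complex.volume_closedBall]
  rw [this, smul_eq_mul]
  field_simp
end
end
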